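/- arXiv:1302.5806 — 5 statements merged into one kernel-verified Lean document; each statement's English description precedes it below -/
import Mathlib

section
/- Let N ≥ 1 be a natural number and let r ≥ 2 be a real number. Then there exists a constant C > 0 (depending only on r and N) such that for all vectors x, y ∈ ℝ^N one has ‖y‖^r − ‖x‖^r − r‖x‖^(r−2)⟨x, y − x⟩ ≥ C‖x − y‖^r, where ⟨·,·⟩ denotes the Euclidean inner product and ‖·‖ the Euclidean norm. -/
/-!
The function `f = ‖·‖ ^ r` lies above its tangent planes (Bernoulli's inequality plus
Cauchy–Schwarz). Taking the tangent plane at `x` and evaluating at the midpoint `m = (x + y) / 2`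
bounds `f x + ⟨∇f x, y - x⟩ / 2` by `f m`, and Clarkson's inequality
`f m + f ((x - y) / 2) ≤ (f x + f y) / 2` turns this into the claim with `C = 2 ^ (1 - r)`.
Clarkson's inequality follows from the parallelogram law, superadditivity of `t ↦ t ^ (r / 2)`
and its convexity.
-/

namespace Real

lemma rpow_add_mul_rpow_sub_one_mul_sub_le {a b r : ℝ} (ha : 0 < a) (hb : 0 ≤ b) (hr : 1 ≤ r) :
    a ^ r + r * a ^ (r - 1) * (b - a) ≤ b ^ r := by
  have hbernoulli : 1 + r * (b / a - 1) ≤ (b / a) ^ r := by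
    have hlow : -1 ≤ b / a - 1 := by linarith [div_nonneg hb ha.le]
    have h := one_add_mul_self_le_rpow_one_add hlow hr
    rwa [add_sub_cancel] at h
  have hpow : a ^ r = a ^ (r - 1) * a := by
    rw [← rpow_add_one ha.ne']
    ring_nf
  calc a ^ r + r * a ^ (r - 1) * (b - a) = a ^ r * (1 + r * (b / a - 1)) := by
        rw [hpow]; field_simp
    _ ≤ a ^ r * (b / a) ^ r := mul_le_mul_of_nonneg_left hbernoulli (by positivity)
    _ = b ^ r := by rw [div_rpow hb ha.le]; field_simp

lemma add_div_two_rpow_le {u v p : ℝ} (hu : 0 ≤ u) (hv : 0 ≤ v) (hp : 1 ≤ p) :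
    ((u + v) / 2) ^ p ≤ (u ^ p + v ^ p) / 2 := by
  have h := (convexOn_rpow hp).2 (Set.mem_Ici.2 hu) (Set.mem_Ici.2 hv)
    (by norm_num : (0 : ℝ) ≤ 1 / 2) (by norm_num : (0 : ℝ) ≤ 1 / 2) (by norm_num)
  calc ((u + v) / 2) ^ p = ((1 / 2 : ℝ) • u + (1 / 2 : ℝ) • v) ^ p := by
        simp only [smul_eq_mul]; ring_nf
    _ ≤ (1 / 2 : ℝ) • u ^ p + (1 / 2 : ℝ) • v ^ p := h
    _ = (u ^ p + v ^ p) / 2 := by simp only [smul_eq_mul]; ring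

lemma rpow_eq_sq_rpow_div_two {c : ℝ} (hc : 0 ≤ c) (p : ℝ) : c ^ p = (c ^ 2) ^ (p / 2) := by
  rw [← rpow_natCast_mul hc]
  ring_nf

end Real

section InnerProductSpace

variable {E : Type*} [NormedAddCommGroup E] [InnerProductSpace ℝ E]

lemma rpow_norm_add_inner_le {r : ℝ} (hr : 1 ≤ r) (x z : E) :
    ‖x‖ ^ r + r * ‖x‖ ^ (r - 2) * inner ℝ x (z - x) ≤ ‖z‖ ^ r := by
  rcases eq_or_ne x 0 with rfl | hx
  · simp [Real.zero_rpow (by linarith : r ≠ 0), Real.rpow_nonneg (norm_nonneg z)]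
  have hpos : 0 < ‖x‖ := norm_pos_iff.2 hx
  have hinner : inner ℝ x (z - x) ≤ ‖x‖ * ‖z‖ - ‖x‖ ^ 2 := by
    rw [inner_sub_right, real_inner_self_eq_norm_sq]
    linarith [real_inner_le_norm x z]
  have hpow : ‖x‖ ^ (r - 2) * ‖x‖ = ‖x‖ ^ (r - 1) := by
    rw [← Real.rpow_add_one hpos.ne']
    ring_nf
  calc ‖x‖ ^ r + r * ‖x‖ ^ (r - 2) * inner ℝ x (z - x)
      ≤ ‖x‖ ^ r + r * ‖x‖ ^ (r - 2) * (‖x‖ * ‖z‖ - ‖x‖ ^ 2) := by gcongr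
    _ = ‖x‖ ^ r + r * ‖x‖ ^ (r - 1) * (‖z‖ - ‖x‖) := by
        linear_combination (r * (‖z‖ - ‖x‖)) * hpow
    _ ≤ ‖z‖ ^ r := Real.rpow_add_mul_rpow_sub_one_mul_sub_le hpos (norm_nonneg z) hr

lemma norm_half_add_rpow_add_norm_half_sub_rpow_le {p : ℝ} (hp : 2 ≤ p) (x y : E) :
    ‖(2⁻¹ : ℝ) • (x + y)‖ ^ p + ‖(2⁻¹ : ℝ) • (x - y)‖ ^ p ≤ (‖x‖ ^ p + ‖y‖ ^ p) / 2 := by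
  have hp2 : 1 ≤ p / 2 := by linarith
  have hpar : ‖(2⁻¹ : ℝ) • (x + y)‖ ^ 2 + ‖(2⁻¹ : ℝ) • (x - y)‖ ^ 2 =
      (‖x‖ ^ 2 + ‖y‖ ^ 2) / 2 := by
    have h := parallelogram_law_with_norm ℝ x y
    simp only [norm_smul, Real.norm_of_nonneg (by norm_num : (0 : ℝ) ≤ 2⁻¹)]
    linear_combination h / 4
  simp only [Real.rpow_eq_sq_rpow_div_two (norm_nonneg _) p]
  calc (‖(2⁻¹ : ℝ) • (x + y)‖ ^ 2) ^ (p / 2) + (‖(2⁻¹ : ℝ) • (x - y)‖ ^ 2) ^ (p / 2)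
      ≤ (‖(2⁻¹ : ℝ) • (x + y)‖ ^ 2 + ‖(2⁻¹ : ℝ) • (x - y)‖ ^ 2) ^ (p / 2) :=
        Real.add_rpow_le_rpow_add (by positivity) (by positivity) hp2
    _ = ((‖x‖ ^ 2 + ‖y‖ ^ 2) / 2) ^ (p / 2) := by rw [hpar]
    _ ≤ ((‖x‖ ^ 2) ^ (p / 2) + (‖y‖ ^ 2) ^ (p / 2)) / 2 :=
        Real.add_div_two_rpow_le (by positivity) (by positivity) hp2

end InnerProductSpace

theorem lindqvist_inequality_ge_two_general (N : ℕ) (r : ℝ) (hr : 2 ≤ r) :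
    ∃ C : ℝ, 0 < C ∧ ∀ x y : EuclideanSpace ℝ (Fin N),
      ‖y‖ ^ r - ‖x‖ ^ r - r * ‖x‖ ^ (r - 2) * (inner ℝ x (y - x) : ℝ) ≥
        C * ‖x - y‖ ^ r := by
  refine ⟨2 * 2⁻¹ ^ r, by positivity, fun x y => ?_⟩
  have htangent := rpow_norm_add_inner_le (by linarith) x ((2⁻¹ : ℝ) • (x + y))
  rw [show (2⁻¹ : ℝ) • (x + y) - x = (2⁻¹ : ℝ) • (y - x) by module, inner_smul_right] at htangent
  have hclarkson := norm_half_add_rpow_add_norm_half_sub_rpow_le hr x y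
  rw [norm_smul (2⁻¹ : ℝ) (x - y), Real.mul_rpow (norm_nonneg _) (norm_nonneg _),
    Real.norm_of_nonneg (by norm_num : (0 : ℝ) ≤ 2⁻¹)] at hclarkson
  linarith

/-- Lindqvist strong-convexity inequality for `x ↦ ‖x‖^r`, case `r ≥ 2`:
there is `C > 0` (depending only on `r` and `N`) such that for all `x y : ℝ^N`,
`‖y‖^r − ‖x‖^r − r‖x‖^(r−2)⟨x, y − x⟩ ≥ C‖x − y‖^r`. -/
theorem lindqvist_inequality_ge_two (N : ℕ) (hN : 1 ≤ N) (r : ℝ) (hr : 2 ≤ r) :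
    ∃ C : ℝ, 0 < C ∧ ∀ x y : EuclideanSpace ℝ (Fin N),
      ‖y‖ ^ r - ‖x‖ ^ r - r * ‖x‖ ^ (r - 2) * (inner ℝ x (y - x) : ℝ) ≥
        C * ‖x - y‖ ^ r :=
  lindqvist_inequality_ge_two_general N r hr
end

section
/- Let N ≥ 1 be a natural number and let r be a real number with 1 < r < 2. Then there exists a constant C > 0 (depending only on r and N) such that for all vectors x, y ∈ ℝ^N that are not both zero, ‖y‖^r − ‖x‖^r − r‖x‖^(r−2)⟨x, y − x⟩ ≥ C‖x − y‖² / (‖x‖ + ‖y‖)^(2−r), where ⟨·,·⟩ denotes the Euclidean inner product and ‖·‖ the Euclidean norm. -/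
/-!
On `[0, M]` the second derivative `r (r - 1) u ^ (r - 2)` of `u ↦ u ^ r` is at least
`κ = r (r - 1) M ^ (r - 2)` because `r ≤ 2`, so `u ^ r - κ u ^ 2 / 2` is convex there. With
`M = ‖x‖ + ‖y‖`, its tangent line at `‖x‖` bounds the radial gap
`‖y‖ ^ r - ‖x‖ ^ r - r ‖x‖ ^ (r - 1) (‖y‖ - ‖x‖)` below by `κ (‖y‖ - ‖x‖) ^ 2 / 2`. What is left,
`‖x - y‖ ^ 2 - (‖y‖ - ‖x‖) ^ 2 = 2 (‖x‖ ‖y‖ - ⟪x, y⟫) ≥ 0`, enters the gap with the coefficient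
`r ‖x‖ ^ (r - 2) ≥ κ`.
-/

open Set

open scoped RealInnerProductSpace

theorem ConvexOn.add_mul_sub_le_of_hasDerivAt {S : Set ℝ} {f : ℝ → ℝ} {f' x y : ℝ}
    (hf : ConvexOn ℝ S f) (hx : x ∈ S) (hy : y ∈ S) (hderiv : HasDerivAt f f' x) :
    f x + f' * (y - x) ≤ f y := by
  rcases lt_trichotomy x y with hxy | rfl | hyx
  · have := hf.le_slope_of_hasDerivAt hx hy hxy hderiv
    rw [slope_def_field, le_div_iff₀ (sub_pos.2 hxy)] at this
    linarith
  · simp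
  · have := hf.slope_le_of_hasDerivAt hy hx hyx hderiv
    rw [slope_def_field, div_le_iff₀ (sub_pos.2 hyx)] at this
    linarith

theorem convexOn_rpow_sub_mul_sq {r : ℝ} (hr1 : 1 ≤ r) (hr2 : r ≤ 2) (M : ℝ) :
    ConvexOn ℝ (Icc 0 M) fun u => u ^ r - r * (r - 1) * M ^ (r - 2) / 2 * u ^ 2 := by
  set κ := r * (r - 1) * M ^ (r - 2)
  refine convexOn_of_hasDerivWithinAt2_nonneg (convex_Icc 0 M)
    (f' := fun u => r * u ^ (r - 1) - κ * u) (f'' := fun u => r * (r - 1) * u ^ (r - 2) - κ)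
    ?_ (fun u _ => ?_) (fun u hu => ?_) (fun u hu => ?_)
  · exact ((Real.continuous_rpow_const (by linarith)).sub (by fun_prop)).continuousOn
  · have h := (Real.hasDerivAt_rpow_const (x := u) (Or.inr hr1)).sub
      ((hasDerivAt_pow 2 u).const_mul (κ / 2))
    exact (h.congr_deriv (by push_cast; ring)).hasDerivWithinAt
  · rw [interior_Icc] at hu
    have h := ((Real.hasDerivAt_rpow_const (x := u) (p := r - 1) (Or.inl hu.1.ne')).const_mul
      r).sub ((hasDerivAt_id u).const_mul κ)
    exact (h.congr_deriv (by ring_nf)).hasDerivWithinAt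
  · rw [interior_Icc] at hu
    have hpow : M ^ (r - 2) ≤ u ^ (r - 2) :=
      Real.rpow_le_rpow_of_nonpos hu.1 hu.2.le (by linarith)
    have hcoeff : 0 ≤ r * (r - 1) := by nlinarith
    simpa [κ, mul_assoc] using mul_le_mul_of_nonneg_left hpow hcoeff

theorem mul_rpow_add_mul_sq_le_rpow_sub_rpow {r s t : ℝ} (hr1 : 1 ≤ r) (hr2 : r ≤ 2)
    (hs : 0 ≤ s) (ht : 0 ≤ t) :
    r * (r - 1) / 2 * (s + t) ^ (r - 2) * (t - s) ^ 2 ≤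
      t ^ r - s ^ r - r * s ^ (r - 1) * (t - s) := by
  have hderiv := (Real.hasDerivAt_rpow_const (x := s) (Or.inr hr1)).sub
    ((hasDerivAt_pow 2 s).const_mul (r * (r - 1) * (s + t) ^ (r - 2) / 2))
  have := (convexOn_rpow_sub_mul_sq hr1 hr2 (s + t)).add_mul_sub_le_of_hasDerivAt
    ⟨hs, by linarith⟩ ⟨ht, by linarith⟩ hderiv
  push_cast at this
  linarith

theorem mul_rpow_add_mul_norm_sub_sq_le {E : Type*} [NormedAddCommGroup E]
    [InnerProductSpace ℝ E] {r : ℝ} (hr1 : 1 < r) (hr2 : r ≤ 2) (x y : E) :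
    r * (r - 1) / 2 * (‖x‖ + ‖y‖) ^ (r - 2) * ‖x - y‖ ^ 2 ≤
      ‖y‖ ^ r - ‖x‖ ^ r - r * ‖x‖ ^ (r - 2) * ⟪x, y - x⟫ := by
  have hradial := mul_rpow_add_mul_sq_le_rpow_sub_rpow hr1.le hr2 (norm_nonneg x) (norm_nonneg y)
  have hpow : ‖x‖ ^ (r - 1) = ‖x‖ ^ (r - 2) * ‖x‖ := by
    rw [← Real.rpow_add_one' (norm_nonneg x) (by linarith)]
    ring_nf
  have hangular : 0 ≤ (‖x‖ * ‖y‖ - ⟪x, y⟫) *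
      (r * ‖x‖ ^ (r - 2) - r * (r - 1) * (‖x‖ + ‖y‖) ^ (r - 2)) := by
    rcases eq_or_ne x 0 with rfl | hx
    · simp
    have hcoeff : r * (r - 1) * (‖x‖ + ‖y‖) ^ (r - 2) ≤ r * ‖x‖ ^ (r - 2) := calc
      _ ≤ r * (‖x‖ + ‖y‖) ^ (r - 2) := mul_le_mul_of_nonneg_right (by nlinarith) (by positivity)
      _ ≤ r * ‖x‖ ^ (r - 2) := mul_le_mul_of_nonneg_left (Real.rpow_le_rpow_of_nonpos
          (norm_pos_iff.2 hx) (le_add_of_nonneg_right (norm_nonneg y)) (by linarith)) (by linarith)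
    exact mul_nonneg (sub_nonneg.2 (real_inner_le_norm x y)) (sub_nonneg.2 hcoeff)
  rw [hpow] at hradial
  rw [norm_sub_sq_real, inner_sub_right, real_inner_self_eq_norm_sq]
  linear_combination hradial + hangular

theorem lindqvist_inequality_lt_two_general (N : ℕ) (r : ℝ)
    (hr1 : 1 < r) (hr2 : r < 2) :
    ∃ C : ℝ, 0 < C ∧ ∀ x y : EuclideanSpace ℝ (Fin N), ¬(x = 0 ∧ y = 0) →
      ‖y‖ ^ r - ‖x‖ ^ r - r * ‖x‖ ^ (r - 2) * (inner ℝ x (y - x) : ℝ) ≥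
        C * ‖x - y‖ ^ 2 / (‖x‖ + ‖y‖) ^ (2 - r) := by
  refine ⟨r * (r - 1) / 2, by nlinarith, fun x y _ => ?_⟩
  rw [ge_iff_le, div_eq_mul_inv, ← Real.rpow_neg (by positivity), neg_sub, mul_right_comm]
  exact mul_rpow_add_mul_norm_sub_sq_le hr1 hr2.le x y

/-- Lindqvist strong-convexity inequality for `x ↦ ‖x‖^r`, case `1 < r < 2`:
there is `C > 0` (depending only on `r` and `N`) such that for all `x y : ℝ^N`
not both zero,
`‖y‖^r − ‖x‖^r − r‖x‖^(r−2)⟨x, y − x⟩ ≥ C‖x − y‖² / (‖x‖ + ‖y‖)^(2−r)`.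
(When `x = 0`, `‖x‖^(r−2)` is `(0 : ℝ) ^ (r - 2 : ℝ) = 0` by the junk value of
`Real.rpow`, matching the convention that `‖x‖^(r−2)⟨x, y − x⟩` is `0`.) -/
theorem lindqvist_inequality_lt_two (N : ℕ) (hN : 1 ≤ N) (r : ℝ)
    (hr1 : 1 < r) (hr2 : r < 2) :
    ∃ C : ℝ, 0 < C ∧ ∀ x y : EuclideanSpace ℝ (Fin N), ¬(x = 0 ∧ y = 0) →
      ‖y‖ ^ r - ‖x‖ ^ r - r * ‖x‖ ^ (r - 2) * (inner ℝ x (y - x) : ℝ) ≥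
        C * ‖x - y‖ ^ 2 / (‖x‖ + ‖y‖) ^ (2 - r) :=
  lindqvist_inequality_lt_two_general N r hr1 hr2
end

section
/- Let N ≥ 1 and let r ≥ 2 be a real number. Then there exists a constant C > 0 (depending only on r and N) such that for all X, Y ∈ ℝ^N and all real a, b > 0, setting Φ = (1 + (r−1)(b/a)^r) X − r (b/a)^{r−1} Y and Ψ = (1 + (r−1)(a/b)^r) Y − r (a/b)^{r−1} X, one has ‖X‖^{r−2}⟨X, Φ⟩ + ‖Y‖^{r−2}⟨Y, Ψ⟩ ≥ C ‖bX − aY‖^r (a^{−r} + b^{−r}), where ⟨·,·⟩ is the Euclidean inner product and ‖·‖ the Euclidean norm, with the convention that ‖v‖^{r−2}⟨v, w⟩ = 0 whenever v = 0. -/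
/-!
Put `x = X / a`, `y = Y / b`. The left-hand side regroups as `a ^ r D(x, y) + b ^ r D(y, x)`, where
`D` is the Bregman divergence of `‖·‖ ^ r`, and the right-hand side is
`C ‖x - y‖ ^ r (a ^ r + b ^ r)`. So it suffices that `D(x, y) ≥ C ‖x - y‖ ^ r` for `r ≥ 2`
(Lindqvist). With `m` the midpoint of `x` and `y`, the three-point identity of Bregman
divergences gives `D(x, y) ≥ r ⟪g m - g y, m - y⟫` for `g z = ‖z‖ ^ (r - 2) • z`, and this is
bounded below by a multiple of `‖m - y‖ ^ r` because `‖z‖ ^ (r - 2)` grows with `‖z‖`.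
-/

open Real
open scoped RealInnerProductSpace

lemma rpow_sub_two_mul_sq {x r : ℝ} (hx : 0 ≤ x) (hr : r ≠ 0) : x ^ (r - 2) * x ^ 2 = x ^ r := by
  rw [← rpow_add_natCast' hx (by simpa using hr)]
  norm_num

lemma rpow_sub_two_mul_self {x r : ℝ} (hx : 0 ≤ x) (hr : r ≠ 1) :
    x ^ (r - 2) * x = x ^ (r - 1) := by
  rw [← rpow_add_one' hx (by contrapose! hr; linarith)]
  ring_nf

lemma rpow_add_mul_rpow_sub_one_mul_sub_le_rpow {r s t : ℝ} (hr : 1 < r) (hs : 0 ≤ s)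
    (ht : 0 ≤ t) :
    t ^ r + r * t ^ (r - 1) * (s - t) ≤ s ^ r := by
  obtain rfl | ht := ht.eq_or_lt
  · simp [zero_rpow (by linarith : r ≠ 0), zero_rpow (by linarith : r - 1 ≠ 0), rpow_nonneg hs]
  have bernoulli := one_add_mul_self_le_rpow_one_add (s := s / t - 1)
    (by linarith [div_nonneg hs ht.le]) hr.le
  rw [add_sub_cancel, div_rpow hs ht.le, le_div_iff₀ (rpow_pos_of_pos ht r)] at bernoulli
  calc t ^ r + r * t ^ (r - 1) * (s - t) = (1 + r * (s / t - 1)) * t ^ r := by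
        rw [rpow_sub_one ht.ne']; field_simp
    _ ≤ s ^ r := bernoulli

variable {E : Type*} [NormedAddCommGroup E]

lemma half_norm_sub_rpow_le {r : ℝ} (hr : 2 ≤ r) (x y : E) :
    (‖x - y‖ / 2) ^ (r - 2) ≤ ‖x‖ ^ (r - 2) + ‖y‖ ^ (r - 2) := by
  have hr' : 0 ≤ r - 2 := by linarith
  have half_le_max : ‖x - y‖ / 2 ≤ max ‖x‖ ‖y‖ := by
    linarith [norm_sub_le x y, le_max_left ‖x‖ ‖y‖, le_max_right ‖x‖ ‖y‖]
  calc (‖x - y‖ / 2) ^ (r - 2) ≤ max ‖x‖ ‖y‖ ^ (r - 2) := by gcongr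
    _ ≤ ‖x‖ ^ (r - 2) + ‖y‖ ^ (r - 2) := by
      rcases max_choice ‖x‖ ‖y‖ with h | h <;> rw [h] <;> simp [rpow_nonneg]

variable [InnerProductSpace ℝ E]

/-- The Bregman divergence of `‖·‖ ^ r`, whose gradient at `y` is `r • ‖y‖ ^ (r - 2) • y`. -/
noncomputable def normRpowBregman (r : ℝ) (x y : E) : ℝ :=
  ‖x‖ ^ r - ‖y‖ ^ r - r * ⟪‖y‖ ^ (r - 2) • y, x - y⟫

lemma normRpowBregman_eq {r : ℝ} (hr : r ≠ 0) (x y : E) :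
    normRpowBregman r x y = ‖x‖ ^ r + (r - 1) * ‖y‖ ^ r - r * ‖y‖ ^ (r - 2) * ⟪y, x⟫ := by
  rw [normRpowBregman, real_inner_smul_left, inner_sub_right, real_inner_self_eq_norm_sq,
    mul_sub, rpow_sub_two_mul_sq (norm_nonneg y) hr]
  ring

lemma normRpowBregman_nonneg {r : ℝ} (hr : 1 < r) (x y : E) : 0 ≤ normRpowBregman r x y := by
  have tangent := rpow_add_mul_rpow_sub_one_mul_sub_le_rpow hr (norm_nonneg x) (norm_nonneg y)
  have cauchy_schwarz : ‖y‖ ^ (r - 2) * ⟪y, x⟫ ≤ ‖y‖ ^ (r - 1) * ‖x‖ := by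
    rw [← rpow_sub_two_mul_self (norm_nonneg y) hr.ne', mul_assoc]
    exact mul_le_mul_of_nonneg_left (real_inner_le_norm y x) (by positivity)
  have norm_rpow : ‖y‖ ^ (r - 1) * ‖y‖ = ‖y‖ ^ r := by
    rw [← rpow_add_one' (norm_nonneg y) (by linarith)]
    ring_nf
  rw [normRpowBregman_eq (by positivity)]
  nlinarith [mul_le_mul_of_nonneg_left cauchy_schwarz (by linarith : (0 : ℝ) ≤ r)]

lemma normRpowBregman_three_point (r : ℝ) (x m y : E) :
    normRpowBregman r x y = normRpowBregman r x m + normRpowBregman r m y +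
      r * ⟪‖m‖ ^ (r - 2) • m - ‖y‖ ^ (r - 2) • y, x - m⟫ := by
  simp only [normRpowBregman, inner_sub_left, inner_sub_right]
  ring

lemma two_mul_half_norm_sub_rpow_le_inner {r : ℝ} (hr : 2 ≤ r) (x y : E) :
    2 * (‖x - y‖ / 2) ^ r ≤ ⟪‖x‖ ^ (r - 2) • x - ‖y‖ ^ (r - 2) • y, x - y⟫ := by
  set α := ‖x‖ ^ (r - 2)
  set β := ‖y‖ ^ (r - 2)
  have polarization : 2 * ⟪α • x - β • y, x - y⟫ =
      (α + β) * ‖x - y‖ ^ 2 + (α - β) * (‖x‖ ^ 2 - ‖y‖ ^ 2) := by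
    simp only [inner_sub_left, inner_sub_right, real_inner_smul_left, real_inner_self_eq_norm_sq,
      norm_sub_sq_real, real_inner_comm x y]
    ring
  have monotone : 0 ≤ (α - β) * (‖x‖ ^ 2 - ‖y‖ ^ 2) := by
    rcases le_total ‖x‖ ‖y‖ with h | h
    · exact mul_nonneg_of_nonpos_of_nonpos
        (sub_nonpos.2 (rpow_le_rpow (norm_nonneg x) h (by linarith))) (sub_nonpos.2 (by gcongr))
    · exact mul_nonneg (sub_nonneg.2 (rpow_le_rpow (norm_nonneg y) h (by linarith)))
        (sub_nonneg.2 (by gcongr))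
  have split : 2 * (‖x - y‖ / 2) ^ r = (‖x - y‖ / 2) ^ (r - 2) * ‖x - y‖ ^ 2 / 2 := by
    rw [← rpow_sub_two_mul_sq (by positivity) (by positivity : r ≠ 0)]
    ring
  have := mul_le_mul_of_nonneg_right (half_norm_sub_rpow_le hr x y) (sq_nonneg ‖x - y‖)
  linarith

lemma normRpowBregman_ge {r : ℝ} (hr : 2 ≤ r) (x y : E) :
    2 * r * (‖x - y‖ / 4) ^ r ≤ normRpowBregman r x y := by
  -- at the midpoint `m`, the cross term of the three-point identity is the monotonicity term
  set m : E := (2 : ℝ)⁻¹ • (x + y)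
  have hxm : x - m = m - y := by module
  have hmy : ‖m - y‖ / 2 = ‖x - y‖ / 4 := by
    rw [show m - y = (2 : ℝ)⁻¹ • (x - y) by module, norm_smul]
    norm_num
    ring
  have := two_mul_half_norm_sub_rpow_le_inner hr m y
  rw [normRpowBregman_three_point r x m y, hxm, ← hmy]
  have hr1 : 1 < r := by linarith
  linarith [normRpowBregman_nonneg hr1 x m, normRpowBregman_nonneg hr1 m y,
    mul_le_mul_of_nonneg_left this (by linarith : (0 : ℝ) ≤ r)]

lemma rpow_norm_smul_mul_inner_eq {r a b : ℝ} (hr : r ≠ 0) (ha : 0 < a) (hb : 0 < b) (x y : E) :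
    ‖a • x‖ ^ (r - 2) *
        ⟪a • x, (1 + (r - 1) * (b / a) ^ r) • (a • x) - (r * (b / a) ^ (r - 1)) • (b • y)⟫ =
      a ^ r * ‖x‖ ^ r + b ^ r * ((r - 1) * ‖x‖ ^ r - r * ‖x‖ ^ (r - 2) * ⟪x, y⟫) := by
  rw [norm_smul, norm_of_nonneg ha.le, mul_rpow ha.le (norm_nonneg x), div_rpow hb.le ha.le,
    div_rpow hb.le ha.le, rpow_sub_one hb.ne', rpow_sub_one ha.ne', rpow_sub ha, rpow_two,
    ← rpow_sub_two_mul_sq (norm_nonneg x) hr]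
  simp only [inner_sub_right, real_inner_smul_left, real_inner_smul_right,
    real_inner_self_eq_norm_sq, norm_smul, norm_of_nonneg ha.le, mul_pow]
  have : a ^ r ≠ 0 := (rpow_pos_of_pos ha r).ne'
  field_simp
  ring

lemma diazSaa_eq_normRpowBregman {r a b : ℝ} (hr : r ≠ 0) (ha : 0 < a) (hb : 0 < b) (x y : E) :
    ‖a • x‖ ^ (r - 2) *
          ⟪a • x, (1 + (r - 1) * (b / a) ^ r) • (a • x) - (r * (b / a) ^ (r - 1)) • (b • y)⟫ +
        ‖b • y‖ ^ (r - 2) *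
          ⟪b • y, (1 + (r - 1) * (a / b) ^ r) • (b • y) - (r * (a / b) ^ (r - 1)) • (a • x)⟫ =
      a ^ r * normRpowBregman r x y + b ^ r * normRpowBregman r y x := by
  rw [rpow_norm_smul_mul_inner_eq hr ha hb, rpow_norm_smul_mul_inner_eq hr hb ha,
    normRpowBregman_eq hr, normRpowBregman_eq hr, real_inner_comm x y]
  ring

theorem diaz_saa_coercivity_ge_two_general (N : ℕ) (r : ℝ) (hr : 2 ≤ r) :
    ∃ C : ℝ, 0 < C ∧ ∀ X Y : EuclideanSpace ℝ (Fin N), ∀ a b : ℝ, 0 < a → 0 < b →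
      ‖X‖ ^ (r - 2) *
          (inner ℝ X ((1 + (r - 1) * (b / a) ^ r) • X - (r * (b / a) ^ (r - 1)) • Y) : ℝ) +
        ‖Y‖ ^ (r - 2) *
          (inner ℝ Y ((1 + (r - 1) * (a / b) ^ r) • Y - (r * (a / b) ^ (r - 1)) • X) : ℝ) ≥
      C * ‖b • X - a • Y‖ ^ r * (a ^ (-r) + b ^ (-r)) := by
  refine ⟨2 * r / 4 ^ r, by positivity, fun X Y a b ha hb => ?_⟩
  obtain ⟨x, rfl⟩ : ∃ x, X = a • x := ⟨a⁻¹ • X, (smul_inv_smul₀ ha.ne' X).symm⟩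
  obtain ⟨y, rfl⟩ : ∃ y, Y = b • y := ⟨b⁻¹ • Y, (smul_inv_smul₀ hb.ne' Y).symm⟩
  have hxy : ‖b • a • x - a • b • y‖ ^ r = a ^ r * b ^ r * ‖x - y‖ ^ r := by
    rw [smul_comm b a x, ← smul_sub, ← smul_sub, smul_smul, norm_smul,
      norm_of_nonneg (by positivity), mul_rpow (by positivity) (norm_nonneg _),
      mul_rpow ha.le hb.le]
  have lower_xy := normRpowBregman_ge hr x y
  have lower_yx := normRpowBregman_ge hr y x
  rw [norm_sub_rev y x, div_rpow (norm_nonneg _) (by norm_num)] at lower_yx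
  rw [div_rpow (norm_nonneg _) (by norm_num)] at lower_xy
  have : a ^ r ≠ 0 := (rpow_pos_of_pos ha r).ne'
  have : b ^ r ≠ 0 := (rpow_pos_of_pos hb r).ne'
  rw [ge_iff_le, diazSaa_eq_normRpowBregman (by positivity) ha hb, hxy, rpow_neg ha.le,
    rpow_neg hb.le]
  calc 2 * r / 4 ^ r * (a ^ r * b ^ r * ‖x - y‖ ^ r) * ((a ^ r)⁻¹ + (b ^ r)⁻¹)
      = a ^ r * (2 * r * (‖x - y‖ ^ r / 4 ^ r)) + b ^ r * (2 * r * (‖x - y‖ ^ r / 4 ^ r)) := by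
        field_simp
        ring
    _ ≤ a ^ r * normRpowBregman r x y + b ^ r * normRpowBregman r y x := by
        gcongr

/-- Pointwise coercivity estimate in the Díaz–Saa argument, case `r ≥ 2`:
there is `C > 0` (depending only on `r` and `N`) such that for all
`X Y : ℝ^N` and `a, b > 0`, with
`Φ = (1 + (r−1)(b/a)^r) X − r (b/a)^{r−1} Y` and
`Ψ = (1 + (r−1)(a/b)^r) Y − r (a/b)^{r−1} X`, one has
`‖X‖^{r−2}⟨X, Φ⟩ + ‖Y‖^{r−2}⟨Y, Ψ⟩ ≥ C ‖bX − aY‖^r (a^{−r} + b^{−r})`. -/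
theorem diaz_saa_coercivity_ge_two (N : ℕ) (hN : 1 ≤ N) (r : ℝ) (hr : 2 ≤ r) :
    ∃ C : ℝ, 0 < C ∧ ∀ X Y : EuclideanSpace ℝ (Fin N), ∀ a b : ℝ, 0 < a → 0 < b →
      ‖X‖ ^ (r - 2) *
          (inner ℝ X ((1 + (r - 1) * (b / a) ^ r) • X - (r * (b / a) ^ (r - 1)) • Y) : ℝ) +
        ‖Y‖ ^ (r - 2) *
          (inner ℝ Y ((1 + (r - 1) * (a / b) ^ r) • Y - (r * (a / b) ^ (r - 1)) • X) : ℝ) ≥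
      C * ‖b • X - a • Y‖ ^ r * (a ^ (-r) + b ^ (-r)) :=
  diaz_saa_coercivity_ge_two_general N r hr
end

section
/- Let N ≥ 1 and let r be a real number with 1 < r < 2. Then there exists a constant C > 0 (depending only on r and N) such that for all X, Y ∈ ℝ^N not both zero and all real a, b > 0, setting Φ = (1 + (r−1)(b/a)^r) X − r (b/a)^{r−1} Y and Ψ = (1 + (r−1)(a/b)^r) Y − r (a/b)^{r−1} X, one has ‖X‖^{r−2}⟨X, Φ⟩ + ‖Y‖^{r−2}⟨Y, Ψ⟩ ≥ C (‖bX − aY‖² / (b‖X‖ + a‖Y‖)^{2−r}) (a^{−r} + b^{−r}), where ⟨·,·⟩ is the Euclidean inner product and ‖·‖ the Euclidean norm, with the convention that ‖v‖^{r−2}⟨v, w⟩ = 0 whenever v = 0. -/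
/-!
Put `ξ = a⁻¹ • X` and `η = b⁻¹ • Y`. The left-hand side equals `a ^ r D(ξ, η) + b ^ r D(η, ξ)`,
where `D` is the Bregman divergence of `‖·‖ ^ r` (the Díaz–Saa identity), and for `1 < r ≤ 2`
Lindqvist's inequality `D(ξ, η) ≥ (r - 1) / 2 ‖ξ - η‖² (‖ξ‖ + ‖η‖) ^ (r - 2)` gives the claim with
`C = (r - 1) / 2` after scaling back.

Since `D(ξ, η)` and the lower bound are affine in `⟪η, ξ⟫`, it suffices to check the collinear
extremes `⟪η, ξ⟫ = ± ‖ξ‖ ‖η‖`. The aligned case is Taylor's formula with integral remainder for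
`t ↦ t ^ r` together with `t ^ (r - 2) ≥ (u + v) ^ (r - 2)` between `u` and `v`; the opposite case
follows from `(u + v) ^ r ≤ 2 (u ^ r + v ^ r)`.
-/

open Real intervalIntegral
open scoped RealInnerProductSpace

lemma rpow_eq_sq_mul_rpow_sub_two {r w : ℝ} (hr : r ≠ 0) (hw : 0 ≤ w) :
    w ^ r = w ^ 2 * w ^ (r - 2) := by
  rw [← rpow_natCast, ← rpow_add' hw (by simpa using hr)]
  norm_num

lemma rpow_sub_one_eq_rpow_sub_two_mul {r w : ℝ} (hr : r ≠ 1) (hw : 0 ≤ w) :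
    w ^ (r - 1) = w ^ (r - 2) * w := by
  rw [← rpow_add_one' hw (by contrapose! hr; linarith)]
  ring_nf

lemma integral_rpow_taylor_remainder {r u : ℝ} (hr : 1 < r) (hu : 0 ≤ u) (v : ℝ) :
    ∫ t in v..u, r * (r - 1) * (u * t ^ (r - 2) - t ^ (r - 1)) =
      u ^ r + (r - 1) * v ^ r - r * v ^ (r - 1) * u := by
  have h2 : -1 < r - 2 := by linarith
  have h1 : -1 < r - 1 := by linarith
  rw [integral_const_mul, integral_sub ((intervalIntegrable_rpow' h2).const_mul u)
    (intervalIntegrable_rpow' h1), integral_const_mul, integral_rpow (Or.inl h2),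
    integral_rpow (Or.inl h1), show r - 2 + 1 = r - 1 by ring, show r - 1 + 1 = r by ring]
  have hu_r : u * u ^ (r - 1) = u ^ r := by
    rw [mul_comm, ← rpow_add_one' hu (by linarith)]
    ring_nf
  have : r - 1 ≠ 0 := by linarith
  have : r ≠ 0 := by linarith
  field_simp
  linear_combination r * hu_r

lemma rpow_taylor_remainder_lower_bound {r u v : ℝ} (hr1 : 1 < r) (hr2 : r ≤ 2) (hu : 0 ≤ u)
    (hv : 0 ≤ v) :
    r * (r - 1) / 2 * ((u - v) ^ 2 * (u + v) ^ (r - 2)) ≤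
      u ^ r + (r - 1) * v ^ r - r * v ^ (r - 1) * u := by
  set K := (u + v) ^ (r - 2)
  have hK : ∫ t in v..u, r * (r - 1) * (K * (u - t)) = r * (r - 1) / 2 * ((u - v) ^ 2 * K) := by
    rw [integral_const_mul, integral_const_mul, integral_comp_sub_left (fun t => t), sub_self,
      integral_id]
    ring
  have hc : 0 ≤ r * (r - 1) := by nlinarith
  have hKt : ∀ t, 0 < t → t ≤ u + v → K ≤ t ^ (r - 2) := fun t ht htuv =>
    rpow_le_rpow_of_nonpos ht htuv (by linarith)
  have hsplit : ∀ t, 0 < t → u * t ^ (r - 2) - t ^ (r - 1) = t ^ (r - 2) * (u - t) :=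
    fun t ht => by rw [rpow_sub_one_eq_rpow_sub_two_mul hr1.ne' ht.le]; ring
  have hf : ∀ a b : ℝ, IntervalIntegrable (fun t => r * (r - 1) * (K * (u - t)))
      MeasureTheory.volume a b :=
    (by fun_prop : Continuous fun t => r * (r - 1) * (K * (u - t))).intervalIntegrable
  have hg : ∀ a b : ℝ, IntervalIntegrable (fun t => r * (r - 1) * (u * t ^ (r - 2) - t ^ (r - 1)))
      MeasureTheory.volume a b := fun a b =>
    (((intervalIntegrable_rpow' (by linarith)).const_mul u).sub
      (intervalIntegrable_rpow' (by linarith))).const_mul _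
  rw [← hK, ← integral_rpow_taylor_remainder hr1 hu v]
  rcases le_total v u with hvu | huv
  · refine integral_mono_on_of_le_Ioo hvu (hf _ _) (hg _ _) fun t ⟨hvt, htu⟩ => ?_
    have ht : 0 < t := hv.trans_lt hvt
    rw [hsplit t ht]
    exact mul_le_mul_of_nonneg_left
      (mul_le_mul_of_nonneg_right (hKt t ht (by linarith)) (by linarith)) hc
  · rw [integral_symm u v, integral_symm u v, neg_le_neg_iff]
    refine integral_mono_on_of_le_Ioo huv (hg _ _) (hf _ _) fun t ⟨hut, htv⟩ => ?_
    have ht : 0 < t := hu.trans_lt hut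
    rw [hsplit t ht]
    exact mul_le_mul_of_nonneg_left
      (mul_le_mul_of_nonpos_right (hKt t ht (by linarith)) (by linarith)) hc

lemma add_rpow_le_two_mul_add_rpow {r u v : ℝ} (hr1 : 1 ≤ r) (hr2 : r ≤ 2) (hu : 0 ≤ u)
    (hv : 0 ≤ v) : (u + v) ^ r ≤ 2 * (u ^ r + v ^ r) := by
  have hmean : (u + v) ^ r ≤ 2 ^ (r - 1) * (u ^ r + v ^ r) := by
    exact_mod_cast NNReal.rpow_add_le_mul_rpow_add_rpow ⟨u, hu⟩ ⟨v, hv⟩ hr1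
  have htwo : (2 : ℝ) ^ (r - 1) ≤ 2 ^ (1 : ℝ) :=
    rpow_le_rpow_of_exponent_le (by norm_num) (by linarith)
  rw [rpow_one] at htwo
  nlinarith [rpow_nonneg hu r, rpow_nonneg hv r]

lemma rpow_bregman_lower_bound_of_abs_le {r u v p : ℝ} (hr1 : 1 < r) (hr2 : r ≤ 2) (hu : 0 ≤ u)
    (hv : 0 ≤ v) (hp : |p| ≤ u * v) :
    (r - 1) / 2 * ((u ^ 2 + v ^ 2 - 2 * p) * (u + v) ^ (r - 2)) ≤
      u ^ r + (r - 1) * v ^ r - r * v ^ (r - 2) * p := by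
  obtain ⟨hp_lo, hp_hi⟩ := abs_le.1 hp
  have htaylor := rpow_taylor_remainder_lower_bound hr1 hr2 hu hv
  set K := (u + v) ^ (r - 2)
  set W := v ^ (r - 2)
  have hK : 0 ≤ K := rpow_nonneg (by linarith) _
  have hW : 0 ≤ W := rpow_nonneg hv _
  have hvW : v ^ (r - 1) = W * v := rpow_sub_one_eq_rpow_sub_two_mul hr1.ne' hv
  have h_aligned :
      (r - 1) / 2 * ((u - v) ^ 2 * K) ≤ u ^ r + (r - 1) * v ^ r - r * W * (u * v) := by
    rw [hvW] at htaylor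
    have hX := mul_nonneg (sq_nonneg (u - v)) hK
    nlinarith [mul_nonneg (mul_nonneg (sub_nonneg.2 hr1.le) (sub_nonneg.2 hr1.le)) hX]
  have h_opposite :
      (r - 1) / 2 * ((u + v) ^ 2 * K) ≤ u ^ r + (r - 1) * v ^ r + r * W * (u * v) := by
    rw [← rpow_eq_sq_mul_rpow_sub_two (by linarith) (by linarith)]
    nlinarith [add_rpow_le_two_mul_add_rpow hr1.le hr2 hu hv, rpow_nonneg hu r,
      mul_nonneg (mul_nonneg hW hu) hv]
  rcases le_total 0 (r * W - (r - 1) * K) with hcoef | hcoef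
  · nlinarith [mul_nonneg (sub_nonneg.2 hp_hi) hcoef]
  · nlinarith [mul_nonneg (neg_le_iff_add_nonneg.1 hp_lo) (neg_nonneg.2 hcoef)]

section InnerProductSpace

variable {E : Type*} [NormedAddCommGroup E] [InnerProductSpace ℝ E]

/-- For `η ≠ 0` this is the Bregman divergence `‖ξ‖ ^ r - ‖η‖ ^ r - r ‖η‖ ^ (r - 2) ⟪η, ξ - η⟫`
of `‖·‖ ^ r`. -/
noncomputable def bregmanRPow (r : ℝ) (ξ η : E) : ℝ :=
  ‖ξ‖ ^ r + (r - 1) * ‖η‖ ^ r - r * ‖η‖ ^ (r - 2) * ⟪η, ξ⟫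

lemma bregmanRPow_lower_bound {r : ℝ} (hr1 : 1 < r) (hr2 : r ≤ 2) (ξ η : E) :
    (r - 1) / 2 * (‖ξ - η‖ ^ 2 * (‖ξ‖ + ‖η‖) ^ (r - 2)) ≤ bregmanRPow r ξ η := by
  have hp : |⟪η, ξ⟫| ≤ ‖ξ‖ * ‖η‖ := by
    rw [mul_comm]; exact abs_real_inner_le_norm η ξ
  rw [bregmanRPow, norm_sub_sq_real, real_inner_comm]
  convert rpow_bregman_lower_bound_of_abs_le hr1 hr2 (norm_nonneg _) (norm_nonneg _) hp using 3
  ring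

lemma norm_rpow_sub_two_mul_inner_eq_bregmanRPow {r a b : ℝ} (hr : r ≠ 0) (ha : 0 < a)
    (hb : 0 < b) (X Y : E) :
    ‖X‖ ^ (r - 2) * ⟪X, (1 + (r - 1) * (b / a) ^ r) • X - (r * (b / a) ^ (r - 1)) • Y⟫ +
        ‖Y‖ ^ (r - 2) * ⟪Y, (1 + (r - 1) * (a / b) ^ r) • Y - (r * (a / b) ^ (r - 1)) • X⟫ =
      a ^ r * bregmanRPow r (a⁻¹ • X) (b⁻¹ • Y) + b ^ r * bregmanRPow r (b⁻¹ • Y) (a⁻¹ • X) := by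
  simp only [bregmanRPow, inner_sub_right, real_inner_smul_left, real_inner_smul_right,
    real_inner_self_eq_norm_sq, norm_smul, norm_inv, Real.norm_of_nonneg ha.le,
    Real.norm_of_nonneg hb.le, mul_rpow (inv_nonneg.2 ha.le) (norm_nonneg _),
    mul_rpow (inv_nonneg.2 hb.le) (norm_nonneg _), inv_rpow ha.le, inv_rpow hb.le,
    div_rpow ha.le hb.le, div_rpow hb.le ha.le, real_inner_comm X Y]
  rw [rpow_sub_one ha.ne', rpow_sub_one hb.ne', rpow_eq_sq_mul_rpow_sub_two hr (norm_nonneg X),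
    rpow_eq_sq_mul_rpow_sub_two hr (norm_nonneg Y), rpow_eq_sq_mul_rpow_sub_two hr ha.le,
    rpow_eq_sq_mul_rpow_sub_two hr hb.le]
  have := (rpow_pos_of_pos ha (r - 2)).ne'
  have := (rpow_pos_of_pos hb (r - 2)).ne'
  field_simp
  ring

lemma scaled_norm_sub_sq_mul_rpow_eq (r : ℝ) {a b : ℝ} (ha : 0 < a) (hb : 0 < b)
    (X Y : E) :
    a ^ r * (‖a⁻¹ • X - b⁻¹ • Y‖ ^ 2 * (‖a⁻¹ • X‖ + ‖b⁻¹ • Y‖) ^ (r - 2)) +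
        b ^ r * (‖b⁻¹ • Y - a⁻¹ • X‖ ^ 2 * (‖b⁻¹ • Y‖ + ‖a⁻¹ • X‖) ^ (r - 2)) =
      ‖b • X - a • Y‖ ^ 2 / (b * ‖X‖ + a * ‖Y‖) ^ (2 - r) * (a ^ (-r) + b ^ (-r)) := by
  have hdiff : a⁻¹ • X - b⁻¹ • Y = (a * b)⁻¹ • (b • X - a • Y) := by
    rw [smul_sub, smul_smul, smul_smul]
    congr 2 <;> field_simp
  have hsum : ‖a⁻¹ • X‖ + ‖b⁻¹ • Y‖ = (a * b)⁻¹ * (b * ‖X‖ + a * ‖Y‖) := by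
    rw [norm_smul, norm_smul, norm_inv, norm_inv, Real.norm_of_nonneg ha.le,
      Real.norm_of_nonneg hb.le]
    field_simp
  have hab : 0 < a * b := mul_pos ha hb
  have hD : 0 ≤ b * ‖X‖ + a * ‖Y‖ := by positivity
  rw [norm_sub_rev (b⁻¹ • Y), add_comm ‖b⁻¹ • Y‖, hdiff, hsum, norm_smul, norm_inv,
    Real.norm_of_nonneg hab.le, mul_rpow (inv_nonneg.2 hab.le) hD, inv_rpow hab.le,
    mul_rpow ha.le hb.le, show 2 - r = -(r - 2) by ring, rpow_neg hD, rpow_neg ha.le,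
    rpow_neg hb.le, rpow_sub ha, rpow_sub hb, rpow_two, rpow_two]
  have := (rpow_pos_of_pos ha r).ne'
  have := (rpow_pos_of_pos hb r).ne'
  rw [div_inv_eq_mul]
  field_simp
  ring

end InnerProductSpace

theorem diaz_saa_coercivity_lt_two_general (N : ℕ) (r : ℝ)
    (hr1 : 1 < r) (hr2 : r < 2) :
    ∃ C : ℝ, 0 < C ∧ ∀ X Y : EuclideanSpace ℝ (Fin N), ¬(X = 0 ∧ Y = 0) →
      ∀ a b : ℝ, 0 < a → 0 < b →
      ‖X‖ ^ (r - 2) *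
          (inner ℝ X ((1 + (r - 1) * (b / a) ^ r) • X - (r * (b / a) ^ (r - 1)) • Y) : ℝ) +
        ‖Y‖ ^ (r - 2) *
          (inner ℝ Y ((1 + (r - 1) * (a / b) ^ r) • Y - (r * (a / b) ^ (r - 1)) • X) : ℝ) ≥
      C * (‖b • X - a • Y‖ ^ 2 / (b * ‖X‖ + a * ‖Y‖) ^ (2 - r)) *
        (a ^ (-r) + b ^ (-r)) := by
  refine ⟨(r - 1) / 2, by linarith, fun X Y _ a b ha hb => ?_⟩
  have h₁ := bregmanRPow_lower_bound hr1 hr2.le (a⁻¹ • X) (b⁻¹ • Y)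
  have h₂ := bregmanRPow_lower_bound hr1 hr2.le (b⁻¹ • Y) (a⁻¹ • X)
  rw [ge_iff_le, norm_rpow_sub_two_mul_inner_eq_bregmanRPow (by linarith) ha hb, mul_assoc,
    ← scaled_norm_sub_sq_mul_rpow_eq r ha hb]
  linarith [mul_le_mul_of_nonneg_left h₁ (rpow_nonneg ha.le r),
    mul_le_mul_of_nonneg_left h₂ (rpow_nonneg hb.le r)]

/-- Pointwise coercivity estimate in the Díaz–Saa argument, case `1 < r < 2`:
there is `C > 0` (depending only on `r` and `N`) such that for all
`X Y : ℝ^N` not both zero and all `a, b > 0`, with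
`Φ = (1 + (r−1)(b/a)^r) X − r (b/a)^{r−1} Y` and
`Ψ = (1 + (r−1)(a/b)^r) Y − r (a/b)^{r−1} X`, one has
`‖X‖^{r−2}⟨X, Φ⟩ + ‖Y‖^{r−2}⟨Y, Ψ⟩
  ≥ C (‖bX − aY‖² / (b‖X‖ + a‖Y‖)^{2−r}) (a^{−r} + b^{−r})`.
(The convention `‖v‖^{r−2}⟨v, w⟩ = 0` for `v = 0` is automatic, since
`(0:ℝ) ^ (r−2) = 0` by `Real.rpow` when `r < 2`.) -/
theorem diaz_saa_coercivity_lt_two (N : ℕ) (hN : 1 ≤ N) (r : ℝ)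
    (hr1 : 1 < r) (hr2 : r < 2) :
    ∃ C : ℝ, 0 < C ∧ ∀ X Y : EuclideanSpace ℝ (Fin N), ¬(X = 0 ∧ Y = 0) →
      ∀ a b : ℝ, 0 < a → 0 < b →
      ‖X‖ ^ (r - 2) *
          (inner ℝ X ((1 + (r - 1) * (b / a) ^ r) • X - (r * (b / a) ^ (r - 1)) • Y) : ℝ) +
        ‖Y‖ ^ (r - 2) *
          (inner ℝ Y ((1 + (r - 1) * (a / b) ^ r) • Y - (r * (a / b) ^ (r - 1)) • X) : ℝ) ≥
      C * (‖b • X - a • Y‖ ^ 2 / (b * ‖X‖ + a * ‖Y‖) ^ (2 - r)) *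
        (a ^ (-r) + b ^ (-r)) :=
  diaz_saa_coercivity_lt_two_general N r hr1 hr2
end

section
/- Let Ω be a nonempty set and let θ be a real number with 0 < θ < 1. Let S : (Ω → ℝ) → (Ω → ℝ) be a map that is (i) monotone: for all f, g : Ω → ℝ with f(x) ≤ g(x) for every x ∈ Ω, one has (S f)(x) ≤ (S g)(x) for every x ∈ Ω; and (ii) θ-subhomogeneous: for every real c > 0 and every f : Ω → ℝ, S(c·f) = c^θ · (S f) (pointwise). Suppose u, ũ : Ω → ℝ satisfy S u = u and S ũ = ũ, that there exist points x₀, x₁ ∈ Ω with u(x₀) > 0 and ũ(x₁) > 0, and that there exist constants c, c′ > 0 with c·ũ(x) ≤ u(x) and c′·u(x) ≤ ũ(x) for every x ∈ Ω. Then u = ũ. -/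
/-- Key step: the optimal comparison constant is at least `1`. -/
lemma kras_aux {Ω : Type*} (θ : ℝ)
    (hθ0 : 0 < θ) (hθ1 : θ < 1) (S : (Ω → ℝ) → (Ω → ℝ))
    (hmono : ∀ f g : Ω → ℝ, (∀ x, f x ≤ g x) → ∀ x, S f x ≤ S g x)
    (hsub : ∀ c : ℝ, 0 < c → ∀ f : Ω → ℝ,
      S (fun x => c * f x) = fun x => c ^ θ * S f x)
    (u v : Ω → ℝ) (hu : S u = u) (hv : S v = v)
    (x₁ : Ω) (hx₁ : 0 < v x₁)
    (c : ℝ) (hc : 0 < c) (hcv : ∀ x, c * v x ≤ u x) :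
    ∃ s : ℝ, 1 ≤ s ∧ ∀ x, s * v x ≤ u x := by
  set M : Set ℝ := {C : ℝ | 0 < C ∧ ∀ x, C * v x ≤ u x} with hM
  have hcM : c ∈ M := ⟨hc, hcv⟩
  have hne : M.Nonempty := ⟨c, hcM⟩
  have hbdd : BddAbove M := by
    refine ⟨u x₁ / v x₁, fun C hC => ?_⟩
    exact (le_div_iff₀ hx₁).2 (hC.2 x₁)
  set s := sSup M with hs
  have hcs : c ≤ s := le_csSup hbdd hcM
  have hspos : 0 < s := lt_of_lt_of_le hc hcs
  have hsv : ∀ x, s * v x ≤ u x := by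
    intro x
    rcases le_or_gt (v x) 0 with hvx | hvx
    · calc s * v x ≤ c * v x := mul_le_mul_of_nonpos_right hcs hvx
        _ ≤ u x := hcv x
    · have : s ≤ u x / v x := csSup_le hne fun C hC => (le_div_iff₀ hvx).2 (hC.2 x)
      exact (le_div_iff₀ hvx).1 this
  -- apply S: s^θ is also an admissible constant
  have hstep : ∀ x, s ^ θ * v x ≤ u x := by
    intro x
    have h1 : S (fun x => s * v x) x ≤ S u x := hmono _ _ hsv x
    have h2 : S (fun x => s * v x) = fun x => s ^ θ * S v x := hsub s hspos v
    rw [h2, hv] at h1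
    rw [hu] at h1
    exact h1
  have hmem : s ^ θ ∈ M := ⟨Real.rpow_pos_of_pos hspos θ, hstep⟩
  have hle : s ^ θ ≤ s := le_csSup hbdd hmem
  refine ⟨s, ?_, hsv⟩
  by_contra h
  push_neg at h
  have : s < s ^ θ := by
    have := Real.rpow_lt_rpow_of_exponent_gt hspos h hθ1
    rwa [Real.rpow_one] at this
  linarith

/-- Abstract Krasnoselskii-type uniqueness: if `S` is a monotone,
`θ`-subhomogeneous (`0 < θ < 1`) map on real-valued functions on `Ω`, then two
fixed points of `S` that are somewhere positive and mutually comparable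
(`c·ũ ≤ u` and `c′·u ≤ ũ` pointwise for some `c, c′ > 0`) must coincide. -/
theorem krasnoselskii_uniqueness {Ω : Type*} [Nonempty Ω] (θ : ℝ)
    (hθ0 : 0 < θ) (hθ1 : θ < 1) (S : (Ω → ℝ) → (Ω → ℝ))
    (hmono : ∀ f g : Ω → ℝ, (∀ x, f x ≤ g x) → ∀ x, S f x ≤ S g x)
    (hsub : ∀ c : ℝ, 0 < c → ∀ f : Ω → ℝ,
      S (fun x => c * f x) = fun x => c ^ θ * S f x)
    (u v : Ω → ℝ) (hu : S u = u) (hv : S v = v)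
    (x₀ x₁ : Ω) (hx₀ : 0 < u x₀) (hx₁ : 0 < v x₁)
    (c c' : ℝ) (hc : 0 < c) (hc' : 0 < c')
    (hcv : ∀ x, c * v x ≤ u x) (hc'u : ∀ x, c' * u x ≤ v x) :
    u = v := by
  obtain ⟨s, hs1, hsv⟩ := kras_aux θ hθ0 hθ1 S hmono hsub u v hu hv x₁ hx₁ c hc hcv
  obtain ⟨s', hs'1, hs'u⟩ := kras_aux θ hθ0 hθ1 S hmono hsub v u hv hu x₀ hx₀ c' hc' hc'u
  -- s * s' ≤ 1 from evaluation at x₁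
  have hu1 : 0 < u x₁ := lt_of_lt_of_le (by positivity) (hsv x₁)
  have hss' : s * s' ≤ 1 := by
    have h1 : s' * u x₁ ≤ v x₁ := hs'u x₁
    have h2 : s * v x₁ ≤ u x₁ := hsv x₁
    nlinarith
  have hs_eq : s = 1 := le_antisymm (by nlinarith) hs1
  have hs'_eq : s' = 1 := le_antisymm (by nlinarith) hs'1
  funext x
  have h1 := hsv x
  have h2 := hs'u x
  rw [hs_eq, one_mul] at h1
  rw [hs'_eq, one_mul] at h2
  linarith
end
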